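/- For all integers k and n with 1 ≤ k ≤ n−1, there is no c-competitive randomized online algorithm of type (k, n) with c < H_k: for every randomized online algorithm A of type (k,n), every real c < H_k, and every constant a, there exists a request sequence σ with E[C_A(σ)] > c·OPT(σ) + a. -/

import Mathlib

/-!
Paging model: vertices are `Fin n`, configurations are `k`-element subsets of
`Fin n`.  `OPT` is the optimal offline cost and `expCost` the expected cost of a
randomized online algorithm (given by its transition kernel `RandAlg.step`),
starting from `{0,…,k−1}`; `harmonic k` (from Mathlib) is `H_k`.

STATEMENT: For all integers `k` and `n` with `1 ≤ k ≤ n−1`, there is no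
`c`-competitive randomized online algorithm of type `(k, n)` with `c < H_k`:
for every randomized online algorithm `A` of type `(k,n)`, every real `c < H_k`,
and every constant `a`, there exists a request sequence `σ` with
`E[C_A(σ)] > c·OPT(σ) + a`.
-/

open scoped ENNReal

/-- The initial configuration `{0, …, k−1}` as a subset of `Fin n`. -/
def initConf (k n : ℕ) : Finset (Fin n) :=
  Finset.univ.filter (fun v => (v : ℕ) < k)

/-- The cost of a sequence of configurations, starting from configuration `C`:
the sum over consecutive steps of the number of newly covered vertices. -/
def listCost {n : ℕ} : Finset (Fin n) → List (Finset (Fin n)) → ℕ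
  | _, [] => 0
  | C, D :: L => (D \ C).card + listCost D L

/-- `Cs` is a service of the request sequence `σ` by `k`-element configurations:
the `t`-th configuration covers the `t`-th request. -/
def Serves {n : ℕ} (k : ℕ) (σ : List (Fin n)) (Cs : List (Finset (Fin n))) : Prop :=
  List.Forall₂ (· ∈ ·) σ Cs ∧ ∀ C ∈ Cs, C.card = k

/-- The optimal offline cost of serving `σ`, starting from `{0,…,k−1}`. -/
noncomputable def OPT (k n : ℕ) (σ : List (Fin n)) : ℕ :=
  sInf {m | ∃ Cs, Serves k σ Cs ∧ listCost (initConf k n) Cs = m}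

/-- A (transition kernel of a) randomized online algorithm: given the request history,
the current configuration and a new request, produce a distribution over configurations. -/
abbrev Kernel (n : ℕ) := List (Fin n) → Finset (Fin n) → Fin n → PMF (Finset (Fin n))

/-- The distribution over configuration sequences induced by running kernel `K`
on request sequence `σ`, with history `hist` and current configuration `C`. -/
noncomputable def runFrom {n : ℕ} (K : Kernel n) :
    List (Fin n) → List (Fin n) → Finset (Fin n) → PMF (List (Finset (Fin n)))
  | [], _, _ => PMF.pure []
  | r :: rest, hist, C =>
      (K hist C r).bind fun C' =>
        (runFrom K rest (hist ++ [r]) C').map fun L => C' :: L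

/-- The distribution over configuration sequences induced by running kernel `K`
on request sequence `σ`, starting from the configuration `{0,…,k−1}`. -/
noncomputable def run {n : ℕ} (k : ℕ) (K : Kernel n) (σ : List (Fin n)) :
    PMF (List (Finset (Fin n))) :=
  runFrom K σ [] (initConf k n)

/-- The expected cost of the randomized online algorithm with kernel `K` on `σ`. -/
noncomputable def expCost {n : ℕ} (k : ℕ) (K : Kernel n) (σ : List (Fin n)) : ℝ :=
  ∑' Cs : List (Finset (Fin n)),
    ((run k K σ) Cs).toReal * (listCost (initConf k n) Cs : ℝ)

/-- One step of the marking process: mark `r`; if `k+1` vertices are marked,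
erase all marks except the one on `r`. -/
def markUpdate {n : ℕ} (k : ℕ) (M : Finset (Fin n)) (r : Fin n) : Finset (Fin n) :=
  if (insert r M).card = k + 1 then {r} else insert r M

/-- The set of marked vertices after processing the request sequence `σ`
(initially the vertices `{0,…,k−1}` are marked). -/
def marksAfter {n : ℕ} (k : ℕ) (σ : List (Fin n)) : Finset (Fin n) :=
  σ.foldl (markUpdate k) (initConf k n)

/-- The marking algorithm of type `(k,n)`: on a request `r`, first update the marks;
if `r` is covered do nothing, and otherwise evict a uniformly random unmarked
covered vertex and move its server to `r`. -/
noncomputable def markingKernel (k n : ℕ) : Kernel n := fun hist C r =>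
  let M := marksAfter k (hist ++ [r])
  if r ∈ C then PMF.pure C
  else if h : (C \ M).Nonempty then
    (PMF.uniformOfFinset (C \ M) h).map fun u => insert r (C.erase u)
  else PMF.pure (insert r (C.erase (if h2 : C.Nonempty then C.min' h2 else r)))

/-- A randomized online algorithm of type `(k,n)`: a transition kernel which,
from any `k`-element configuration, moves to a configuration that covers the
request and again has `k` elements. -/
structure RandAlg (k n : ℕ) where
  step : Kernel n
  valid : ∀ (hist : List (Fin n)) (C : Finset (Fin n)) (r : Fin n), C.card = k →
    ∀ C' ∈ (step hist C r).support, r ∈ C' ∧ C'.card = k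

open Finset
open scoped BigOperators

/-!
Yao's principle, with `T` requests drawn independently and uniformly from the `k + 1` pages
`{0, …, k}`. An online algorithm always misses one of these pages, so each request costs it at
least `1/(k+1)` in expectation whatever it does: its average cost is at least `T/(k+1)`.
Offline, cut the requests into phases, a phase ending once every page except the one that ended
the previous phase has been requested. Holding, during each phase, all pages but the one that
ends it costs one fault per phase. A phase is a coupon-collector run of expected length
`(k+1) H_k`, and the potential `phasePotential` turns this into an average offline cost of at
most `T/((k+1) H_k) + 1`. For `c < H_k` and large `T` the average online cost therefore exceeds
`c` times the average offline cost plus `a`, hence so does the cost on some sequence.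
-/

section InitConf

variable {k n : ℕ}

lemma mem_initConf {v : Fin n} : v ∈ initConf k n ↔ (v : ℕ) < k := by
  simp [initConf]

lemma card_initConf (h : k ≤ n) : (initConf k n).card = k := by
  rw [initConf, Fin.card_filter_val_lt, min_eq_right h]

lemma initConf_ssubset_succ (h : k < n) : initConf k n ⊂ initConf (k + 1) n := by
  refine (ssubset_iff_of_subset fun v hv => ?_).mpr ⟨⟨k, h⟩, ?_⟩ <;> simp_all [mem_initConf]
  omega

end InitConf

namespace PMF

variable {α β : Type*}

lemma tsum_bind_mul (p : PMF α) (f : α → PMF β) (g : β → ℝ≥0∞) :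
    ∑' b, p.bind f b * g b = ∑' a, p a * ∑' b, f a b * g b := by
  simp only [bind_apply, ← ENNReal.tsum_mul_right, ← ENNReal.tsum_mul_left, mul_assoc]
  exact ENNReal.tsum_comm

lemma tsum_map_mul (p : PMF α) (f : α → β) (g : β → ℝ≥0∞) :
    ∑' b, p.map f b * g b = ∑' a, p a * g (f a) := by
  simp only [map, tsum_bind_mul, Function.comp_apply, pure_apply, ite_mul, one_mul, zero_mul,
    tsum_ite_eq]

lemma le_tsum_mul_of_forall_le {p : PMF α} {g : α → ℝ≥0∞} {c : ℝ≥0∞}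
    (h : ∀ a ∈ p.support, c ≤ g a) : c ≤ ∑' a, p a * g a := calc
  c = ∑' a, p a * c := by rw [ENNReal.tsum_mul_right, tsum_coe, one_mul]
  _ ≤ ∑' a, p a * g a := ENNReal.tsum_le_tsum fun a => by
    by_cases ha : a ∈ p.support
    · exact mul_le_mul_right (h a ha) _
    · simp [(apply_eq_zero_iff p a).mpr ha]

lemma tsum_mul_le_of_forall_le {p : PMF α} {g : α → ℝ≥0∞} {c : ℝ≥0∞}
    (h : ∀ a ∈ p.support, g a ≤ c) : ∑' a, p a * g a ≤ c := calc
  ∑' a, p a * g a ≤ ∑' a, p a * c := ENNReal.tsum_le_tsum fun a => by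
    by_cases ha : a ∈ p.support
    · exact mul_le_mul_right (h a ha) _
    · simp [(apply_eq_zero_iff p a).mpr ha]
  _ = c := by rw [ENNReal.tsum_mul_right, tsum_coe, one_mul]

end PMF

section ExpectedCost

variable {n : ℕ}

noncomputable def expCostFrom (K : Kernel n) (σ hist : List (Fin n)) (C : Finset (Fin n)) :
    ℝ≥0∞ :=
  ∑' Cs, runFrom K σ hist C Cs * listCost C Cs

lemma expCostFrom_nil (K : Kernel n) (hist : List (Fin n)) (C : Finset (Fin n)) :
    expCostFrom K [] hist C = 0 := by
  simp [expCostFrom, runFrom, PMF.pure_apply, listCost]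

lemma expCostFrom_cons (K : Kernel n) (r : Fin n) (σ hist : List (Fin n)) (C : Finset (Fin n)) :
    expCostFrom K (r :: σ) hist C =
      ∑' C', K hist C r C' * ((C' \ C).card + expCostFrom K σ (hist ++ [r]) C') := by
  simp only [expCostFrom, runFrom, PMF.tsum_bind_mul, PMF.tsum_map_mul, listCost, Nat.cast_add,
    mul_add, ENNReal.tsum_add, ENNReal.tsum_mul_right, PMF.tsum_coe, one_mul]

lemma expCostFrom_le (K : Kernel n) (σ hist : List (Fin n)) (C : Finset (Fin n)) :
    expCostFrom K σ hist C ≤ σ.length * n := by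
  induction σ generalizing hist C with
  | nil => simp [expCostFrom_nil]
  | cons r σ ih =>
    rw [expCostFrom_cons]
    refine PMF.tsum_mul_le_of_forall_le fun C' _ => ?_
    have hcard : ((C' \ C).card : ℝ≥0∞) ≤ n := by
      exact_mod_cast (card_le_univ _).trans_eq (Fintype.card_fin n)
    calc ((C' \ C).card : ℝ≥0∞) + expCostFrom K σ (hist ++ [r]) C'
        ≤ n + σ.length * n := add_le_add hcard (ih _ _)
      _ = (r :: σ).length * n := by push_cast [List.length_cons]; ring

lemma expCostFrom_ne_top (K : Kernel n) (σ hist : List (Fin n)) (C : Finset (Fin n)) :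
    expCostFrom K σ hist C ≠ ⊤ :=
  ne_top_of_le_ne_top (by finiteness) (expCostFrom_le K σ hist C)

lemma expCost_eq_toReal (k : ℕ) (K : Kernel n) (σ : List (Fin n)) :
    expCost k K σ = (expCostFrom K σ [] (initConf k n)).toReal := by
  rw [expCost, expCostFrom, ENNReal.tsum_toReal_eq fun Cs =>
    ENNReal.mul_ne_top (PMF.apply_ne_top _ _) (ENNReal.natCast_ne_top _)]
  simp [run]

end ExpectedCost

section ListsOfLength

variable {α : Type*}

lemma List.injective_uncurry_cons : Function.Injective (Function.uncurry (@List.cons α)) :=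
  fun _ _ h => Prod.ext (List.cons.inj h).1 (List.cons.inj h).2

variable [DecidableEq α]

def listsOfLength (S : Finset α) : ℕ → Finset (List α)
  | 0 => {[]}
  | T + 1 => (S ×ˢ listsOfLength S T).image (Function.uncurry List.cons)

lemma sum_listsOfLength_succ {M : Type*} [AddCommMonoid M] (S : Finset α) (T : ℕ)
    (f : List α → M) :
    ∑ σ ∈ listsOfLength S (T + 1), f σ = ∑ r ∈ S, ∑ σ ∈ listsOfLength S T, f (r :: σ) := by
  rw [listsOfLength, sum_image List.injective_uncurry_cons.injOn, sum_product]
  rfl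

lemma expect_listsOfLength_succ {M : Type*} [AddCommMonoid M] [Module ℚ≥0 M] (S : Finset α)
    (T : ℕ) (f : List α → M) :
    𝔼 σ ∈ listsOfLength S (T + 1), f σ = 𝔼 r ∈ S, 𝔼 σ ∈ listsOfLength S T, f (r :: σ) := by
  rw [listsOfLength, expect_image List.injective_uncurry_cons.injOn, expect_product]
  rfl

lemma card_listsOfLength (S : Finset α) (T : ℕ) : (listsOfLength S T).card = S.card ^ T := by
  induction T with
  | zero => rfl
  | succ T ih =>
    rw [listsOfLength, card_image_of_injective _ List.injective_uncurry_cons, card_product, ih,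
      pow_succ']

lemma listsOfLength_nonempty {S : Finset α} (hS : S.Nonempty) (T : ℕ) :
    (listsOfLength S T).Nonempty :=
  card_pos.mp (card_listsOfLength S T ▸ pow_pos (card_pos.mpr hS) T)

lemma mem_of_mem_listsOfLength {S : Finset α} {T : ℕ} {σ : List α} {r : α}
    (hσ : σ ∈ listsOfLength S T) (hr : r ∈ σ) : r ∈ S := by
  induction T generalizing σ with
  | zero => simp_all [listsOfLength]
  | succ T ih =>
    simp only [listsOfLength, mem_image, mem_product] at hσ
    obtain ⟨⟨r', τ⟩, ⟨hr', hτ⟩, rfl⟩ := hσ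
    rcases List.mem_cons.mp hr with rfl | hr
    · exact hr'
    · exact ih hτ hr

end ListsOfLength

section OnlineCost

variable {k n : ℕ}

lemma sum_expCostFrom_cons (K : Kernel n) (N : Finset (Fin n)) (T : ℕ) (r : Fin n)
    (hist : List (Fin n)) (C : Finset (Fin n)) :
    ∑ σ ∈ listsOfLength N T, expCostFrom K (r :: σ) hist C =
      ∑' C', K hist C r C' * (N.card ^ T * (C' \ C).card +
        ∑ σ ∈ listsOfLength N T, expCostFrom K σ (hist ++ [r]) C') := by
  simp only [expCostFrom_cons, ← Summable.tsum_finsetSum fun _ _ => ENNReal.summable, ← mul_sum,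
    sum_add_distrib, sum_const, card_listsOfLength, nsmul_eq_mul, Nat.cast_pow]

lemma card_mul_pow_le_sum_expCostFrom (A : RandAlg k n) {N : Finset (Fin n)} (hN : k < N.card)
    (T : ℕ) (hist : List (Fin n)) (C : Finset (Fin n)) (hC : C.card = k) :
    (T * N.card ^ T : ℝ≥0∞) ≤ N.card * ∑ σ ∈ listsOfLength N T, expCostFrom A.step σ hist C := by
  induction T generalizing hist C with
  | zero => simp
  | succ T ih =>
    set m : ℝ≥0∞ := (N.card : ℝ≥0∞)
    obtain ⟨r₀, hr₀N, hr₀C⟩ := exists_mem_notMem_of_card_lt_card (hC ▸ hN)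
    -- a request for `r₀ ∉ C` costs at least one, whatever the algorithm does
    have hstep : ∀ r ∈ N, T * m ^ T + (if r = r₀ then m ^ (T + 1) else 0) ≤
        ∑' C', A.step hist C r C' * (m * (m ^ T * (C' \ C).card +
          ∑ σ ∈ listsOfLength N T, expCostFrom A.step σ (hist ++ [r]) C')) := by
      intro r _
      refine PMF.le_tsum_mul_of_forall_le fun C' hC' => ?_
      obtain ⟨hrC', hC'k⟩ := A.valid hist C r hC C' hC'
      rw [mul_add, add_comm (m * _)]
      refine add_le_add (ih _ _ hC'k) ?_
      split_ifs with hr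
      · subst hr
        have : (1 : ℝ≥0∞) ≤ (C' \ C).card :=
          Nat.one_le_cast.mpr (card_pos.mpr ⟨r, mem_sdiff.mpr ⟨hrC', hr₀C⟩⟩)
        calc m ^ (T + 1) = m * (m ^ T * 1) := by ring
          _ ≤ m * (m ^ T * (C' \ C).card) := by gcongr
      · exact zero_le
    calc ((T + 1 : ℕ) * m ^ (T + 1) : ℝ≥0∞)
        = ∑ r ∈ N, (T * m ^ T + if r = r₀ then m ^ (T + 1) else 0) := by
          rw [sum_add_distrib, sum_const, sum_ite_eq', if_pos hr₀N, nsmul_eq_mul]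
          push_cast
          ring
      _ ≤ ∑ r ∈ N, ∑' C', A.step hist C r C' * (m * (m ^ T * (C' \ C).card +
            ∑ σ ∈ listsOfLength N T, expCostFrom A.step σ (hist ++ [r]) C')) :=
          sum_le_sum hstep
      _ = m * ∑ σ ∈ listsOfLength N (T + 1), expCostFrom A.step σ hist C := by
          rw [sum_listsOfLength_succ, mul_sum]
          refine sum_congr rfl fun r _ => ?_
          rw [sum_expCostFrom_cons, ← ENNReal.tsum_mul_left]
          exact tsum_congr fun C' => mul_left_comm _ _ _

lemma div_card_le_expect_expCost (A : RandAlg k n) {N : Finset (Fin n)} (hN : k < N.card)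
    (T : ℕ) : (T : ℝ) / N.card ≤ 𝔼 σ ∈ listsOfLength N T, expCost k A.step σ := by
  have hkn : k ≤ n := (hN.le.trans (card_le_univ N)).trans_eq (Fintype.card_fin n)
  have h := card_mul_pow_le_sum_expCostFrom A hN T [] (initConf k n) (card_initConf hkn)
  have hreal := ENNReal.toReal_mono
    (ENNReal.mul_ne_top (ENNReal.natCast_ne_top _)
      (ENNReal.sum_ne_top.mpr fun σ _ => expCostFrom_ne_top _ _ _ _)) h
  simp only [ENNReal.toReal_mul, ENNReal.toReal_pow, ENNReal.toReal_natCast,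
    ENNReal.toReal_sum fun σ _ => expCostFrom_ne_top _ _ _ _, ← expCost_eq_toReal] at hreal
  have hpos : (0 : ℝ) < N.card := by exact_mod_cast hN.trans_le' (Nat.zero_le k)
  rw [expect_eq_sum_div_card, card_listsOfLength, Nat.cast_pow,
    div_le_div_iff₀ hpos (by positivity)]
  linarith

end OnlineCost

section Phases

variable {α : Type*} [DecidableEq α] {N S : Finset α} {k : ℕ}

/-- `S` is the set of pages of `N` not yet requested in the current phase. When the last of them
is requested the phase ends, and the next one awaits every page of `N` but that one. -/
def nextUnseen (N S : Finset α) (r : α) : Finset α :=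
  if S = {r} then N.erase r else S.erase r

def phaseCount (N : Finset α) : Finset α → List α → ℕ
  | _, [] => 0
  | S, r :: σ => (if S = {r} then 1 else 0) + phaseCount N (nextUnseen N S r) σ

/-- The page of `S` whose first request in `σ` comes last; `d` is only a fallback for empty `S`. -/
noncomputable def lastToAppear (d : α) : List α → Finset α → α
  | [], S => if h : S.Nonempty then h.choose else d
  | r :: σ, S => if S = {r} then r else lastToAppear d σ (S.erase r)

lemma Finset.Nonempty.erase_nonempty_of_ne_singleton {r : α} (hne : S.Nonempty) (h : S ≠ {r}) :
    (S.erase r).Nonempty := by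
  rw [nonempty_iff_ne_empty, Ne, erase_eq_empty_iff, not_or]
  exact ⟨hne.ne_empty, h⟩

lemma nextUnseen_ssubset (hS : S ⊂ N) (r : α) : nextUnseen N S r ⊂ N := by
  unfold nextUnseen
  split_ifs with h
  · exact erase_ssubset (hS.subset (h ▸ mem_singleton_self r))
  · exact (erase_subset r S).trans_ssubset hS

lemma nextUnseen_nonempty (hN : 1 < N.card) (hS : S ⊆ N) (hne : S.Nonempty) (r : α) :
    (nextUnseen N S r).Nonempty := by
  unfold nextUnseen
  split_ifs with h
  · rw [← card_pos, card_erase_of_mem (hS (h ▸ mem_singleton_self r))]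
    omega
  · exact hne.erase_nonempty_of_ne_singleton h

lemma notMem_nextUnseen (N S : Finset α) (r : α) : r ∉ nextUnseen N S r := by
  unfold nextUnseen
  split_ifs <;> exact notMem_erase r _

lemma lastToAppear_mem (d : α) (σ : List α) {S : Finset α} (hS : S.Nonempty) :
    lastToAppear d σ S ∈ S := by
  induction σ generalizing S with
  | nil => simpa [lastToAppear, hS] using hS.choose_spec
  | cons r σ ih =>
    rw [lastToAppear]
    split_ifs with h
    · exact h ▸ mem_singleton_self r
    · exact mem_of_mem_erase (ih (hS.erase_nonempty_of_ne_singleton h))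

end Phases

section Potential

variable {α : Type*} {S : Finset α} {k : ℕ}

lemma harmonic_monotone : Monotone harmonic := fun _ _ h =>
  sum_le_sum_of_subset_of_nonneg (range_mono h) fun _ _ _ => by positivity

/-- `(k + 1) * harmonic j` is the expected number of requests, drawn uniformly from `k + 1` pages,
until all of `j` given pages have been requested (coupon collector). -/
noncomputable def phasePotential (k : ℕ) (S : Finset α) : ℝ :=
  (k + 1) * (harmonic k - harmonic S.card)

lemma phasePotential_nonneg (h : S.card ≤ k) : 0 ≤ phasePotential k S :=
  mul_nonneg (by positivity) (sub_nonneg.mpr (by exact_mod_cast harmonic_monotone h))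

variable [DecidableEq α] {N : Finset α}

lemma phasePotential_nextUnseen (hN : N.card = k + 1) (hS : S ⊆ N) (r : α) :
    (if S = {r} then ((k : ℝ) + 1) * harmonic k else 0) + phasePotential k (nextUnseen N S r) =
      phasePotential k S + if r ∈ S then ((k : ℝ) + 1) / S.card else 0 := by
  unfold nextUnseen phasePotential
  by_cases hSr : S = {r}
  · subst hSr
    simp [card_erase_of_mem (hS (mem_singleton_self r)), hN, harmonic_succ]
    ring
  · rw [if_neg hSr, if_neg hSr, zero_add]
    by_cases hr : r ∈ S
    · obtain ⟨m, hm⟩ := Nat.exists_eq_add_one_of_ne_zero (card_pos.mpr ⟨r, hr⟩).ne'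
      rw [if_pos hr, card_erase_of_mem hr, hm, Nat.add_sub_cancel, harmonic_succ]
      push_cast
      field_simp
      ring
    · rw [if_neg hr, erase_eq_of_notMem hr, add_zero]

lemma expect_phasePotential_nextUnseen (hN : N.card = k + 1) (hS : S ⊆ N) (hne : S.Nonempty) :
    𝔼 r ∈ N, ((if S = {r} then ((k : ℝ) + 1) * harmonic k else 0) +
      phasePotential k (nextUnseen N S r)) = phasePotential k S + 1 := by
  have hNne : N.Nonempty := hne.mono hS
  simp_rw [phasePotential_nextUnseen hN hS, expect_add_distrib, expect_const hNne,
    expect_eq_sum_div_card, sum_ite_mem, inter_eq_right.mpr hS, sum_const, nsmul_eq_mul, hN]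
  field_simp
  push_cast
  ring

lemma expect_phaseCount_le (hk : 1 ≤ k) (hN : N.card = k + 1) (T : ℕ) (hne : S.Nonempty)
    (hS : S ⊂ N) :
    ((k : ℝ) + 1) * harmonic k * 𝔼 σ ∈ listsOfLength N T, (phaseCount N S σ : ℝ) ≤
      T + phasePotential k S := by
  induction T generalizing S with
  | zero =>
    simpa [listsOfLength, phaseCount] using
      phasePotential_nonneg (Nat.lt_succ_iff.mp (hN ▸ card_lt_card hS :))
  | succ T ih =>
    have hLne := listsOfLength_nonempty (hne.mono hS.subset) T
    calc ((k : ℝ) + 1) * harmonic k * 𝔼 σ ∈ listsOfLength N (T + 1), (phaseCount N S σ : ℝ)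
        = 𝔼 r ∈ N, ((if S = {r} then ((k : ℝ) + 1) * harmonic k else 0) +
            ((k : ℝ) + 1) * harmonic k *
              𝔼 σ ∈ listsOfLength N T, (phaseCount N (nextUnseen N S r) σ : ℝ)) := by
          rw [expect_listsOfLength_succ, mul_expect]
          refine expect_congr rfl fun r _ => ?_
          simp only [phaseCount, Nat.cast_add, expect_add_distrib, expect_const hLne, mul_add]
          split_ifs <;> simp
      _ ≤ 𝔼 r ∈ N, ((if S = {r} then ((k : ℝ) + 1) * harmonic k else 0) +
            (T + phasePotential k (nextUnseen N S r))) :=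
          expect_le_expect fun r _ => add_le_add_right (ih
            (nextUnseen_nonempty (by omega) hS.subset hne r) (nextUnseen_ssubset hS r)) _
      _ = (T + 1 : ℕ) + phasePotential k S := by
          simp_rw [add_left_comm _ (T : ℝ)]
          rw [expect_add_distrib, expect_const (hne.mono hS.subset),
            expect_phasePotential_nextUnseen hN hS.subset hne]
          push_cast
          ring

end Potential

section OfflineService

variable {k n : ℕ}

lemma serves_nil : Serves k ([] : List (Fin n)) [] :=
  ⟨.nil, by simp⟩

lemma serves_cons {r : Fin n} {σ : List (Fin n)} {C : Finset (Fin n)}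
    {Cs : List (Finset (Fin n))} :
    Serves k (r :: σ) (C :: Cs) ↔ (r ∈ C ∧ C.card = k) ∧ Serves k σ Cs := by
  simp only [Serves, List.forall₂_cons, List.forall_mem_cons]
  tauto

/-- Throughout a phase, hold every page of `N` except the one that ends the phase. -/
noncomputable def phaseService (d : Fin n) (N : Finset (Fin n)) :
    List (Fin n) → Finset (Fin n) → List (Finset (Fin n))
  | [], _ => []
  | r :: σ, S =>
    (N \ {lastToAppear d σ (nextUnseen N S r)}) :: phaseService d N σ (nextUnseen N S r)

lemma serves_phaseService (hk : 1 ≤ k) {N : Finset (Fin n)} (hN : N.card = k + 1) (d : Fin n)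
    {σ : List (Fin n)} (hσ : ∀ r ∈ σ, r ∈ N) {S : Finset (Fin n)} (hne : S.Nonempty)
    (hS : S ⊂ N) : Serves k σ (phaseService d N σ S) := by
  induction σ generalizing S with
  | nil => exact serves_nil
  | cons r σ ih =>
    have hne' := nextUnseen_nonempty (by omega) hS.subset hne r
    have hq := lastToAppear_mem d σ hne'
    rw [phaseService, serves_cons]
    refine ⟨⟨mem_sdiff.mpr ⟨hσ r List.mem_cons_self, ?_⟩, ?_⟩,
      ih (fun r' hr' => hσ r' (List.mem_cons_of_mem r hr')) hne' (nextUnseen_ssubset hS r)⟩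
    · rw [mem_singleton]
      exact fun h => notMem_nextUnseen N S r (by rwa [← h] at hq)
    · rw [card_sdiff_of_subset (singleton_subset_iff.mpr ((nextUnseen_ssubset hS r).subset hq)),
        hN, card_singleton, Nat.add_sub_cancel]

lemma listCost_phaseService_le (d : Fin n) (N : Finset (Fin n)) (σ : List (Fin n))
    (S : Finset (Fin n)) :
    listCost (N \ {lastToAppear d σ S}) (phaseService d N σ S) ≤ phaseCount N S σ := by
  induction σ generalizing S with
  | nil => simp [phaseService, listCost, phaseCount]
  | cons r σ ih =>
    rw [phaseService, listCost, phaseCount]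
    refine add_le_add ?_ (ih _)
    by_cases h : S = {r}
    · rw [if_pos h, lastToAppear, if_pos h]
      refine (card_le_card fun x hx => ?_).trans (card_singleton r).le
      simp only [mem_sdiff, mem_singleton, not_and, not_not] at hx ⊢
      exact hx.2 hx.1.1
    · simp [lastToAppear, nextUnseen, h]

lemma listCost_le_card_sdiff_add (C C' : Finset (Fin n)) (Cs : List (Finset (Fin n))) :
    listCost C Cs ≤ (C' \ C).card + listCost C' Cs := by
  cases Cs with
  | nil => simp [listCost]
  | cons D L =>
    have hsub : D \ C ⊆ (C' \ C) ∪ (D \ C') := by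
      intro x
      simp only [mem_sdiff, mem_union]
      tauto
    have := (card_le_card hsub).trans (card_union_le _ _)
    simp only [listCost]
    omega

lemma OPT_le_listCost {σ : List (Fin n)} {Cs : List (Finset (Fin n))} (h : Serves k σ Cs) :
    OPT k n σ ≤ listCost (initConf k n) Cs :=
  Nat.sInf_le ⟨Cs, h, rfl⟩

lemma initConf_nonempty (hk : 1 ≤ k) (hkn : k ≤ n) : (initConf k n).Nonempty :=
  card_pos.mp (by rw [card_initConf hkn]; omega)

lemma OPT_le_phaseCount_add_one (hk : 1 ≤ k) (hn : k + 1 ≤ n) {σ : List (Fin n)}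
    (hσ : ∀ r ∈ σ, r ∈ initConf (k + 1) n) :
    OPT k n σ ≤ phaseCount (initConf (k + 1) n) (initConf k n) σ + 1 := by
  set N := initConf (k + 1) n
  have hN : N.card = k + 1 := card_initConf hn
  have hS : initConf k n ⊂ N := initConf_ssubset_succ (by omega)
  set d : Fin n := ⟨0, by omega⟩
  set q := lastToAppear d σ (initConf k n)
  have hstart : ((N \ {q}) \ initConf k n).card ≤ 1 := calc
    _ ≤ (N \ initConf k n).card := card_le_card (sdiff_subset_sdiff sdiff_subset le_rfl)
    _ = 1 := by rw [card_sdiff_of_subset hS.subset, hN, card_initConf (by omega)]; simp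
  set Cs := phaseService d N σ (initConf k n)
  calc OPT k n σ ≤ listCost (initConf k n) Cs :=
        OPT_le_listCost (serves_phaseService hk hN d hσ (initConf_nonempty hk (by omega)) hS)
    _ ≤ ((N \ {q}) \ initConf k n).card + listCost (N \ {q}) Cs :=
        listCost_le_card_sdiff_add _ _ _
    _ ≤ 1 + phaseCount N (initConf k n) σ :=
        add_le_add hstart (listCost_phaseService_le d N σ _)
    _ = phaseCount N (initConf k n) σ + 1 := add_comm _ _

lemma expect_OPT_le (hk : 1 ≤ k) (hn : k + 1 ≤ n) (T : ℕ) :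
    𝔼 σ ∈ listsOfLength (initConf (k + 1) n) T, (OPT k n σ : ℝ) ≤
      T / ((k + 1) * harmonic k) + 1 := by
  have hne := initConf_nonempty hk (by omega : k ≤ n)
  have hS := initConf_ssubset_succ (by omega : k < n)
  have hH : (0 : ℝ) < (k + 1) * harmonic k := by
    have : (0 : ℝ) < harmonic k := by exact_mod_cast harmonic_pos (by omega)
    positivity
  have hpc := expect_phaseCount_le hk (card_initConf hn) T hne hS
  rw [phasePotential, card_initConf (by omega), sub_self, mul_zero, add_zero] at hpc
  calc 𝔼 σ ∈ listsOfLength (initConf (k + 1) n) T, (OPT k n σ : ℝ)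
      ≤ 𝔼 σ ∈ listsOfLength (initConf (k + 1) n) T,
          ((phaseCount (initConf (k + 1) n) (initConf k n) σ : ℝ) + 1) :=
        expect_le_expect fun σ hσ => by
          exact_mod_cast OPT_le_phaseCount_add_one hk hn fun r hr => mem_of_mem_listsOfLength hσ hr
    _ ≤ T / ((k + 1) * harmonic k) + 1 := by
        rw [expect_add_distrib, expect_const (listsOfLength_nonempty (hne.mono hS.subset) T)]
        gcongr
        rwa [le_div_iff₀' hH]

end OfflineService

lemma exists_nat_mul_add_lt {α β : ℝ} (h : α < β) (γ : ℝ) : ∃ T : ℕ, α * T + γ < β * T := by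
  obtain ⟨T, hT⟩ := exists_nat_gt (γ / (β - α))
  rw [div_lt_iff₀ (sub_pos.mpr h)] at hT
  exact ⟨T, by linarith⟩

/-- No randomized online algorithm of type `(k, n)`, `1 ≤ k ≤ n−1`, is
`c`-competitive for `c < H_k`. -/
theorem no_randomized_better_than_Hk (k n : ℕ) (hk : 1 ≤ k) (hkn : k ≤ n - 1)
    (A : RandAlg k n) (c : ℝ) (hc : c < (harmonic k : ℝ)) (a : ℝ) :
    ∃ σ : List (Fin n),
      c * (OPT k n σ : ℝ) + a < expCost k A.step σ := by
  have hn : k + 1 ≤ n := by omega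
  have hH : (0 : ℝ) < harmonic k := by exact_mod_cast harmonic_pos (by omega)
  set N := initConf (k + 1) n
  have hN : N.card = k + 1 := card_initConf hn
  have hslope : max c 0 / ((k + 1) * harmonic k) < 1 / (k + 1) := by
    rw [div_lt_div_iff₀ (by positivity) (by positivity)]
    nlinarith [max_lt hc hH]
  obtain ⟨T, hT⟩ := exists_nat_mul_add_lt hslope (max c 0 + a)
  have hOPT := expect_OPT_le hk hn T
  have hon := div_card_le_expect_expCost A (N := N) (by omega) T
  rw [hN, Nat.cast_add_one] at hon
  obtain ⟨σ, -, hσ⟩ := exists_lt_of_expect_lt_expect <| calc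
    𝔼 σ ∈ listsOfLength N T, (c * (OPT k n σ : ℝ) + a)
        = c * 𝔼 σ ∈ listsOfLength N T, (OPT k n σ : ℝ) + a := by
          rw [expect_add_distrib, mul_expect,
            expect_const (listsOfLength_nonempty (card_pos.mp (by omega)) T)]
      _ ≤ max c 0 * (T / ((k + 1) * harmonic k) + 1) + a :=
          add_le_add_left ((mul_le_mul_of_nonneg_right (le_max_left c 0)
            (expect_nonneg fun σ _ => Nat.cast_nonneg _)).trans
            (mul_le_mul_of_nonneg_left hOPT (le_max_right c 0))) a
      _ = max c 0 / ((k + 1) * harmonic k) * T + (max c 0 + a) := by ring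
      _ < 1 / (k + 1) * T := hT
      _ ≤ 𝔼 σ ∈ listsOfLength N T, expCost k A.step σ := by rwa [one_div_mul_eq_div]
  exact ⟨σ, hσ⟩
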